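/- arXiv:1206.5082 — 2 statements merged into one kernel-verified Lean document; each statement's English description precedes it below -/
import Mathlib

section
/- For every finite simple graph G, the edge-clique cover number θ_e(G) equals the vertex-clique cover number κ(K_e(G)) of the edge-clique graph, i.e. the minimum number of cliques of G needed to cover all edges of G equals the minimum number of cliques of K_e(G) needed to cover all vertices of K_e(G). -/
namespace ECG

/-- The edge-clique graph `K_e(G)`: its vertices are the edges of `G`, and two distinct
edges are adjacent exactly when all their endpoints are pairwise adjacent in `G`
(i.e. the two edges lie in a common clique of `G`). -/
def edgeCliqueGraph {V : Type*} (G : SimpleGraph V) : SimpleGraph G.edgeSet where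
  Adj e f := e ≠ f ∧ G.IsClique {v | v ∈ (e : Sym2 V) ∨ v ∈ (f : Sym2 V)}
  symm := ⟨by
    rintro e f ⟨hne, hcl⟩
    refine ⟨hne.symm, ?_⟩
    have h : {v | v ∈ (f : Sym2 V) ∨ v ∈ (e : Sym2 V)} =
        {v | v ∈ (e : Sym2 V) ∨ v ∈ (f : Sym2 V)} := by
      ext v; exact or_comm
    rw [h]; exact hcl⟩
  loopless := ⟨fun e h => h.1 rfl⟩

/-- A set of vertices is independent when no two of its members are adjacent. -/
def IsIndepSet {V : Type*} (G : SimpleGraph V) (S : Set V) : Prop :=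
  S.Pairwise fun a b => ¬ G.Adj a b

/-- The independence number `α(G)`: the maximum cardinality of an independent set. -/
noncomputable def indepNum {V : Type*} (G : SimpleGraph V) : ℕ :=
  sSup {n | ∃ S : Finset V, IsIndepSet G ↑S ∧ S.card = n}

end ECG

namespace ECG

/-- The edge-clique cover number `θ_e(G)`: the minimum cardinality of a family of cliques
of `G` such that every edge of `G` has both of its endpoints in some member of the family. -/
noncomputable def edgeCliqueCoverNum {V : Type*} (G : SimpleGraph V) : ℕ :=
  sInf {n | ∃ F : Finset (Set V), F.card = n ∧ (∀ C ∈ F, G.IsClique C) ∧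
    ∀ e ∈ G.edgeSet, ∃ C ∈ F, ∀ v ∈ e, v ∈ C}

/-- The vertex-clique cover number `κ(G)`: the minimum number of cliques of `G` whose
union is the whole vertex set. -/
noncomputable def cliqueCoverNum {V : Type*} (G : SimpleGraph V) : ℕ :=
  sInf {n | ∃ F : Finset (Set V), F.card = n ∧ (∀ C ∈ F, G.IsClique C) ∧
    ∀ v : V, ∃ C ∈ F, v ∈ C}

end ECG

/-! The edges lying inside a clique of `G` form a clique of `K_e(G)`, and the endpoints of the
edges in a clique of `K_e(G)` form a clique of `G`. Both constructions turn covers into covers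
with at most as many members, so each cover number bounds the other. -/

theorem Nat.sInf_le_sInf_of_forall_exists_le {s t : Set ℕ} (hs : s.Nonempty)
    (h : ∀ x ∈ s, ∃ y ∈ t, y ≤ x) : sInf t ≤ sInf s := by
  obtain ⟨y, hy, hle⟩ := h _ (Nat.sInf_mem hs)
  exact (Nat.sInf_le hy).trans hle

theorem Nat.sInf_eq_sInf_of_forall_exists_le {s t : Set ℕ} (hst : ∀ x ∈ s, ∃ y ∈ t, y ≤ x)
    (hts : ∀ y ∈ t, ∃ x ∈ s, x ≤ y) : sInf s = sInf t := by
  -- `sInf ∅ = 0`: the hypotheses make `s` and `t` empty together (no finite cover at all)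
  obtain rfl | hs := s.eq_empty_or_nonempty
  · obtain rfl : t = ∅ := Set.eq_empty_of_forall_notMem fun y hy => by
      simpa using hts y hy
    rfl
  obtain ⟨y, hy, -⟩ := hst _ hs.some_mem
  exact le_antisymm (Nat.sInf_le_sInf_of_forall_exists_le ⟨y, hy⟩ hts)
    (Nat.sInf_le_sInf_of_forall_exists_le hs hst)

namespace ECG

variable {V : Type*} {G : SimpleGraph V}

def edgesWithin (G : SimpleGraph V) (C : Set V) : Set G.edgeSet :=
  {e | ∀ v ∈ (e : Sym2 V), v ∈ C}

def endpoints (D : Set G.edgeSet) : Set V :=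
  {v | ∃ e ∈ D, v ∈ (e : Sym2 V)}

theorem isClique_of_mem_edgeSet {e : Sym2 V} (he : e ∈ G.edgeSet) : G.IsClique {v | v ∈ e} :=
  fun _ ha _ hb hab => G.mem_edgeSet.1 ((Sym2.mem_and_mem_iff hab).1 ⟨ha, hb⟩ ▸ he)

theorem isClique_edgesWithin {C : Set V} (hC : G.IsClique C) :
    (edgeCliqueGraph G).IsClique (edgesWithin G C) := by
  intro e he f hf hef
  refine ⟨hef, hC.subset ?_⟩
  rintro v (hv | hv)
  exacts [he v hv, hf v hv]

theorem isClique_endpoints {D : Set G.edgeSet} (hD : (edgeCliqueGraph G).IsClique D) :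
    G.IsClique (endpoints D) := by
  rintro a ⟨e, he, hae⟩ b ⟨f, hf, hbf⟩ hab
  obtain rfl | hef := eq_or_ne e f
  · exact isClique_of_mem_edgeSet e.2 hae hbf hab
  · exact (hD he hf hef).2 (Or.inl hae) (Or.inr hbf) hab

def IsEdgeCliqueCover (G : SimpleGraph V) (F : Finset (Set V)) : Prop :=
  (∀ C ∈ F, G.IsClique C) ∧ ∀ e ∈ G.edgeSet, ∃ C ∈ F, ∀ v ∈ e, v ∈ C

def IsCliqueCover (G : SimpleGraph V) (F : Finset (Set V)) : Prop :=
  (∀ C ∈ F, G.IsClique C) ∧ ∀ v : V, ∃ C ∈ F, v ∈ C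

theorem IsEdgeCliqueCover.image_edgesWithin [DecidableEq (Set G.edgeSet)] {F : Finset (Set V)}
    (hF : IsEdgeCliqueCover G F) : IsCliqueCover (edgeCliqueGraph G) (F.image (edgesWithin G)) := by
  refine ⟨?_, fun e => ?_⟩
  · simp only [Finset.forall_mem_image]
    exact fun C hC => isClique_edgesWithin (hF.1 C hC)
  · obtain ⟨C, hC, heC⟩ := hF.2 e e.2
    exact ⟨_, Finset.mem_image_of_mem _ hC, heC⟩

theorem IsCliqueCover.image_endpoints [DecidableEq (Set V)] {F : Finset (Set G.edgeSet)}
    (hF : IsCliqueCover (edgeCliqueGraph G) F) : IsEdgeCliqueCover G (F.image endpoints) := by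
  refine ⟨?_, fun e he => ?_⟩
  · simp only [Finset.forall_mem_image]
    exact fun D hD => isClique_endpoints (hF.1 D hD)
  · obtain ⟨D, hD, heD⟩ := hF.2 ⟨e, he⟩
    exact ⟨_, Finset.mem_image_of_mem _ hD, fun v hv => ⟨⟨e, he⟩, heD, hv⟩⟩

end ECG

theorem edgeCliqueCoverNum_eq_cliqueCoverNum_edgeCliqueGraph_general
    {V : Type*} (G : SimpleGraph V) :
    ECG.edgeCliqueCoverNum G = ECG.cliqueCoverNum (ECG.edgeCliqueGraph G) := by
  classical
  apply Nat.sInf_eq_sInf_of_forall_exists_le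
  · rintro _ ⟨F, rfl, hF⟩
    exact ⟨_, ⟨_, rfl, ECG.IsEdgeCliqueCover.image_edgesWithin hF⟩, Finset.card_image_le⟩
  · rintro _ ⟨F, rfl, hF⟩
    exact ⟨_, ⟨_, rfl, ECG.IsCliqueCover.image_endpoints hF⟩, Finset.card_image_le⟩

/-- For every finite simple graph `G`, the edge-clique cover number
`θ_e(G)` equals the vertex-clique cover number `κ(K_e(G))` of its edge-clique graph. -/
theorem edgeCliqueCoverNum_eq_cliqueCoverNum_edgeCliqueGraph
    {V : Type*} [Fintype V] (G : SimpleGraph V) :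
    ECG.edgeCliqueCoverNum G = ECG.cliqueCoverNum (ECG.edgeCliqueGraph G) :=
  edgeCliqueCoverNum_eq_cliqueCoverNum_edgeCliqueGraph_general G
end

section
/- For the 5-cycle C5, α'(C5) = 5, while for every independent set W of vertices of C5 one has Σ_{x∈W} d'(x) ≤ 4; hence the equality α'(G) = max{ Σ_{x∈W} d'(x) : W independent in G } fails for G = C5. -/
/-
In `C₅` no two distinct edges lie in a common clique, since their union would contain a
triangle; so all five edges are pairwise independent in `K_e(C₅)` and `α'(C₅) = 5`. On the
other hand every vertex of `C₅` has degree two, so `d'(x) ≤ 2`, and an independent set of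
`C₅` has at most two vertices, so the sum over it is at most `4`.
-/

open Finset SimpleGraph

lemma Sym2.exists_mem_notMem_of_ne {α : Type*} {e f : Sym2 α} (hf : ¬ f.IsDiag)
    (hef : e ≠ f) : ∃ w ∈ f, w ∉ e := by
  induction f using Sym2.ind with
  | _ c d =>
  by_contra! h
  exact hef ((Sym2.mem_and_mem_iff hf).1
    ⟨h c (Sym2.mem_mk_left c d), h d (Sym2.mem_mk_right c d)⟩)

namespace ECG

variable {V : Type*} (G : SimpleGraph V)

lemma indepNum_le_of_forall {n : ℕ} (h : ∀ S : Finset V, IsIndepSet G ↑S → #S ≤ n) :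
    indepNum G ≤ n :=
  csSup_le ⟨0, ∅, by simp [IsIndepSet], rfl⟩ (by rintro m ⟨S, hS, rfl⟩; exact h S hS)

lemma indepNum_le_card [Fintype V] : indepNum G ≤ Fintype.card V :=
  indepNum_le_of_forall G fun S _ => S.card_le_univ

lemma card_le_indepNum [Fintype V] {S : Finset V} (hS : IsIndepSet G ↑S) : #S ≤ indepNum G :=
  le_csSup ⟨Fintype.card V, by rintro m ⟨T, -, rfl⟩; exact T.card_le_univ⟩ ⟨S, hS, rfl⟩

lemma indepNum_bot [Fintype V] : indepNum (⊥ : SimpleGraph V) = Fintype.card V :=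
  (indepNum_le_card ⊥).antisymm
    (card_le_indepNum ⊥ (S := univ) fun _ _ _ _ _ h => h)

lemma indepNum_induce_neighborSet_le_degree (x : V) [Fintype (G.neighborSet x)] :
    indepNum (G.induce (G.neighborSet x)) ≤ G.degree x :=
  (indepNum_le_card _).trans_eq (G.card_neighborSet_eq_degree x)

lemma edgeCliqueGraph_eq_bot_of_cliqueFree_three (hG : G.CliqueFree 3) :
    edgeCliqueGraph G = ⊥ := by
  classical
  ext ⟨e, he⟩ ⟨f, hf⟩
  simp only [bot_adj, iff_false]
  rintro ⟨hne, hcl⟩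
  induction e using Sym2.ind with
  | _ a b =>
  obtain ⟨w, hwf, hwe⟩ := Sym2.exists_mem_notMem_of_ne (G.not_isDiag_of_mem_edgeSet hf)
    (fun h => hne (Subtype.ext h))
  have hwa : w ≠ a := fun h => hwe (h ▸ Sym2.mem_mk_left a b)
  have hwb : w ≠ b := fun h => hwe (h ▸ Sym2.mem_mk_right a b)
  refine hG {a, b, w} (is3Clique_triple_iff.2 ⟨he, ?_, ?_⟩)
  · exact hcl (Or.inl (Sym2.mem_mk_left a b)) (Or.inr hwf) hwa.symm
  · exact hcl (Or.inl (Sym2.mem_mk_right a b)) (Or.inr hwf) hwb.symm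

lemma indepNum_edgeCliqueGraph_of_cliqueFree_three [Fintype G.edgeSet] (hG : G.CliqueFree 3) :
    indepNum (edgeCliqueGraph G) = Fintype.card G.edgeSet := by
  rw [edgeCliqueGraph_eq_bot_of_cliqueFree_three G hG, indepNum_bot]

end ECG

lemma cycleGraph_five_cliqueFree_three : (cycleGraph 5).CliqueFree 3 := by
  unfold CliqueFree
  decide

lemma card_edgeSet_cycleGraph_five : Fintype.card (cycleGraph 5).edgeSet = 5 := by
  rw [← edgeFinset_card]
  decide

lemma card_le_two_of_isIndepSet_cycleGraph_five {W : Finset (Fin 5)}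
    (hW : ECG.IsIndepSet (cycleGraph 5) ↑W) : #W ≤ 2 := by
  simp only [ECG.IsIndepSet, Set.Pairwise, mem_coe] at hW
  revert W
  decide

/-- For the 5-cycle `C₅`, `α'(C₅) = 5`, while every independent set `W`
of vertices of `C₅` satisfies `Σ_{x ∈ W} d'(x) ≤ 4`; hence the cograph formula fails
for `C₅`. -/
theorem cycleGraph_five_counterexample :
    ECG.indepNum (ECG.edgeCliqueGraph (SimpleGraph.cycleGraph 5)) = 5 ∧
      ∀ W : Finset (Fin 5), ECG.IsIndepSet (SimpleGraph.cycleGraph 5) ↑W →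
        ∑ x ∈ W, ECG.indepNum ((SimpleGraph.cycleGraph 5).induce
          ((SimpleGraph.cycleGraph 5).neighborSet x)) ≤ 4 := by
  refine ⟨?_, fun W hW => ?_⟩
  · rw [ECG.indepNum_edgeCliqueGraph_of_cliqueFree_three _ cycleGraph_five_cliqueFree_three,
      card_edgeSet_cycleGraph_five]
  · calc ∑ x ∈ W, ECG.indepNum ((cycleGraph 5).induce ((cycleGraph 5).neighborSet x))
        ≤ ∑ x ∈ W, (cycleGraph 5).degree x :=
          sum_le_sum fun x _ => ECG.indepNum_induce_neighborSet_le_degree _ x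
      _ = 2 * #W := by simp [cycleGraph_degree_three_le, mul_comm]
      _ ≤ 4 := by linarith [card_le_two_of_isIndepSet_cycleGraph_five hW]
end
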